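/- (Invariance of strips.) Fix a nonresonant $\omega\in\mathbb R^n$ and real numbers $M_1\le M_2$. Consider the system of ODEs $\partial_\delta\mathcal H_{\mathbf k}=v_{1,\mathbf k}(\mathcal H)+\mathbf v_{2,\mathbf k}(\mathcal H,\delta)$ where $v_{1,\mathbf k}=-\sum_j\sum_{|l|\ge2}\sigma_{\mathbf k'}(\bar k_j-k_j)l_j\,\mathcal H_{\mathbf k+\mathbf e_j-(l,l)}\mathcal H_{(l,l)}$ and $\mathbf v_{2,\mathbf k}=2\sum_j\sum_{\sigma_{\mathbf l'}<0<\sigma_{\mathbf m'},\,\mathbf l+\mathbf m-\mathbf k=\mathbf e_j}(\bar l_jm_j-l_j\bar m_j)\mathcal H_{\mathbf l}\mathcal H_{\mathbf m}e^{-\omega_{\mathbf l',\mathbf m'}\delta}$. If the initial condition satisfies $\widehat H_{\mathbf k}=0$ for all $\mathbf k$ with $\langle\omega,\mathbf k'\rangle\notin[M_1,M_2]$, then the solution satisfies $\mathcal H_{\mathbf k}(\delta)=0$ for all such $\mathbf k$ and all $\delta\ge0$. -/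
import Mathlib


open scoped Classical

noncomputable section

/-- Indices `𝐤 = (k, k̄) ∈ ℤ_+^{2n}`. -/
abbrev Idx (n : ℕ) := (Fin n → ℕ) × (Fin n → ℕ)

/-- `⟨ω, q⟩`. -/
def inn {n : ℕ} (ω : Fin n → ℝ) (q : Fin n → ℤ) : ℝ := ∑ j, ω j * q j

/-- `𝐤' = k̄ - k`. -/
def kp {n : ℕ} (k : Idx n) : Fin n → ℤ := fun j => (k.2 j : ℤ) - (k.1 j : ℤ)

/-- `|𝐤| = |k| + |k̄|`. -/
def deg {n : ℕ} (k : Idx n) : ℕ := (∑ j, k.1 j) + ∑ j, k.2 j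

/-- The quadratic term `v_{1,𝐤}(H) = -Σ_j Σ_{|l|≥2} σ_{𝐤'} (k̄_j - k_j) l_j
H_{𝐤+𝐞_j-(l,l)} H_{(l,l)}` (only indices with `(l,l) ≤ 𝐤 + 𝐞_j` contribute). -/
def v1 {n : ℕ} (ω : Fin n → ℝ) (k : Idx n) (H : Idx n → ℂ) : ℂ :=
  -∑ j : Fin n, ∑' l : Fin n → ℕ,
    if 2 ≤ ∑ i, l i ∧ (∀ i, l i ≤ k.1 i + (if i = j then 1 else 0)) ∧
        (∀ i, l i ≤ k.2 i + (if i = j then 1 else 0)) then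
      ((Real.sign (inn ω (kp k)) : ℝ) : ℂ) * (((k.2 j : ℤ) - (k.1 j : ℤ) : ℤ) : ℂ) *
        (l j : ℂ) *
        H (fun i => k.1 i + (if i = j then 1 else 0) - l i,
           fun i => k.2 i + (if i = j then 1 else 0) - l i) *
        H (l, l)
    else 0

/-- The quadratic term `𝐯_{2,𝐤}(H,δ) = 2 Σ_j Σ_{σ_{𝐥'}<0<σ_{𝐦'}, 𝐥+𝐦-𝐤=𝐞_j}
(l̄_j m_j - l_j m̄_j) H_𝐥 H_𝐦 e^{-ω_{𝐥',𝐦'} δ}`, with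
`ω_{𝐥',𝐦'} = ω_{𝐥'} + ω_{𝐦'} - ω_{𝐥'+𝐦'}`. -/
def v2 {n : ℕ} (ω : Fin n → ℝ) (k : Idx n) (H : Idx n → ℂ) (δ : ℝ) : ℂ :=
  2 * ∑ j : Fin n, ∑' lm : Idx n × Idx n,
    if Real.sign (inn ω (kp lm.1)) < 0 ∧ 0 < Real.sign (inn ω (kp lm.2)) ∧
        3 ≤ deg lm.1 ∧ 3 ≤ deg lm.2 ∧
        (∀ i, lm.1.1 i + lm.2.1 i = k.1 i + (if i = j then 1 else 0)) ∧
        (∀ i, lm.1.2 i + lm.2.2 i = k.2 i + (if i = j then 1 else 0)) then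
      ((((lm.1.2 j : ℤ) * lm.2.1 j - (lm.1.1 j : ℤ) * lm.2.2 j) : ℤ) : ℂ) *
        H lm.1 * H lm.2 *
        Complex.exp
          ((-((|inn ω (kp lm.1)| + |inn ω (kp lm.2)| - |inn ω (kp lm.1 + kp lm.2)|) * δ) : ℝ) : ℂ)
    else 0

lemma real_sign_neg_iff {x : ℝ} (h : Real.sign x < 0) : x < 0 := by
  by_contra hc
  push_neg at hc
  rcases eq_or_lt_of_le hc with h0 | h0
  · rw [← h0, Real.sign_zero] at h; exact lt_irrefl 0 h
  · rw [Real.sign_of_pos h0] at h; norm_num at h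

lemma real_sign_pos_iff {x : ℝ} (h : 0 < Real.sign x) : 0 < x := by
  by_contra hc
  push_neg at hc
  rcases eq_or_lt_of_le hc with h0 | h0
  · rw [h0, Real.sign_zero] at h; exact lt_irrefl 0 h
  · rw [Real.sign_of_neg h0] at h; norm_num at h

/-- Theorem 4 (invariance of strips): for nonresonant `ω` and `M₁ ≤ M₂`, if the initial
condition of the normalizing system `∂_δ 𝓗_𝐤 = v_{1,𝐤}(𝓗) + 𝐯_{2,𝐤}(𝓗,δ)` vanishes
for every `𝐤` with `⟨ω,𝐤'⟩ ∉ [M₁, M₂]`, then the solution vanishes for all such `𝐤`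
and all `δ ≥ 0`. -/
theorem strip_invariance (n : ℕ) (ω : Fin n → ℝ)
    (hnr : ∀ q : Fin n → ℤ, q ≠ 0 → inn ω q ≠ 0)
    (M₁ M₂ : ℝ) (hM : M₁ ≤ M₂)
    (H : ℝ → Idx n → ℂ)
    (hsupp : ∀ (δ : ℝ) (k : Idx n), deg k < 3 → H δ k = 0)
    (hsol : ∀ k : Idx n, 3 ≤ deg k → ∀ δ : ℝ, 0 ≤ δ →
      HasDerivWithinAt (fun t => H t k) (v1 ω k (H δ) + v2 ω k (H δ) δ) (Set.Ici 0) δ)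
    (hini : ∀ k : Idx n, (inn ω (kp k) < M₁ ∨ M₂ < inn ω (kp k)) → H 0 k = 0) :
    ∀ k : Idx n, (inn ω (kp k) < M₁ ∨ M₂ < inn ω (kp k)) →
      ∀ δ : ℝ, 0 ≤ δ → H δ k = 0 := by
  suffices h : ∀ d : ℕ, ∀ k : Idx n, deg k < d →
      (inn ω (kp k) < M₁ ∨ M₂ < inn ω (kp k)) → ∀ δ : ℝ, 0 ≤ δ → H δ k = 0 by
    intro k hk δ hδ
    exact h (deg k + 1) k (by omega) hk δ hδ
  intro d
  induction d with
  | zero => intro k h; omega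
  | succ d IH =>
    intro k hkd hk δ hδ
    by_cases h3 : deg k < 3
    · exact hsupp δ k h3
    push_neg at h3
    have hkd' : deg k ≤ d := by omega
    -- The right-hand side vanishes at every time `t ≥ 0`.
    have hzero : ∀ t : ℝ, 0 ≤ t → v1 ω k (H t) + v2 ω k (H t) t = 0 := by
      intro t ht
      have hv1 : v1 ω k (H t) = 0 := by
        unfold v1
        rw [neg_eq_zero]
        apply Finset.sum_eq_zero
        intro j _
        have : ∀ l : Fin n → ℕ,
            (if 2 ≤ ∑ i, l i ∧ (∀ i, l i ≤ k.1 i + (if i = j then 1 else 0)) ∧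
                (∀ i, l i ≤ k.2 i + (if i = j then 1 else 0)) then
              ((Real.sign (inn ω (kp k)) : ℝ) : ℂ) * (((k.2 j : ℤ) - (k.1 j : ℤ) : ℤ) : ℂ) *
                (l j : ℂ) *
                H t (fun i => k.1 i + (if i = j then 1 else 0) - l i,
                   fun i => k.2 i + (if i = j then 1 else 0) - l i) *
                H t (l, l)
            else 0) = 0 := by
          intro l
          split_ifs with hcond
          · obtain ⟨hl2, hle1, hle2⟩ := hcond
            set knew : Idx n := (fun i => k.1 i + (if i = j then 1 else 0) - l i,
                   fun i => k.2 i + (if i = j then 1 else 0) - l i) with hknew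
            have hkp : kp knew = kp k := by
              funext i
              have h1 := hle1 i
              have h2 := hle2 i
              simp only [kp, hknew]
              rcases eq_or_ne i j with h | h <;> simp [h] at h1 h2 ⊢ <;> omega
            have hs1 : (∑ i, knew.1 i) + ∑ i, l i = (∑ i, k.1 i) + 1 := by
              rw [← Finset.sum_add_distrib]
              have : ∀ i ∈ Finset.univ, knew.1 i + l i = k.1 i + (if i = j then 1 else 0) := by
                intro i _
                have h1 := hle1 i
                simp only [hknew]
                omega
              rw [Finset.sum_congr rfl this, Finset.sum_add_distrib]
              simp
            have hs2 : (∑ i, knew.2 i) + ∑ i, l i = (∑ i, k.2 i) + 1 := by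
              rw [← Finset.sum_add_distrib]
              have : ∀ i ∈ Finset.univ, knew.2 i + l i = k.2 i + (if i = j then 1 else 0) := by
                intro i _
                have h2 := hle2 i
                simp only [hknew]
                omega
              rw [Finset.sum_congr rfl this, Finset.sum_add_distrib]
              simp
            have hdeg : deg knew < d := by
              unfold deg at hkd' ⊢
              omega
            have hHz : H t knew = 0 := by
              by_cases hd3 : deg knew < 3
              · exact hsupp t knew hd3
              · exact IH knew hdeg (by rwa [hkp]) t ht
            rw [hHz]
            ring
          · rfl
        rw [tsum_congr this, tsum_zero]
      have hv2 : v2 ω k (H t) t = 0 := by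
        unfold v2
        rw [mul_eq_zero]
        right
        apply Finset.sum_eq_zero
        intro j _
        have : ∀ lm : Idx n × Idx n,
            (if Real.sign (inn ω (kp lm.1)) < 0 ∧ 0 < Real.sign (inn ω (kp lm.2)) ∧
                3 ≤ deg lm.1 ∧ 3 ≤ deg lm.2 ∧
                (∀ i, lm.1.1 i + lm.2.1 i = k.1 i + (if i = j then 1 else 0)) ∧
                (∀ i, lm.1.2 i + lm.2.2 i = k.2 i + (if i = j then 1 else 0)) then
              ((((lm.1.2 j : ℤ) * lm.2.1 j - (lm.1.1 j : ℤ) * lm.2.2 j) : ℤ) : ℂ) *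
                H t lm.1 * H t lm.2 *
                Complex.exp
                  ((-((|inn ω (kp lm.1)| + |inn ω (kp lm.2)| - |inn ω (kp lm.1 + kp lm.2)|) * t) : ℝ) : ℂ)
            else 0) = 0 := by
          intro lm
          split_ifs with hcond
          · obtain ⟨hsl, hsm, hdl, hdm, hc1, hc2⟩ := hcond
            have hlneg : inn ω (kp lm.1) < 0 := real_sign_neg_iff hsl
            have hmpos : 0 < inn ω (kp lm.2) := real_sign_pos_iff hsm
            have hkpeq : ∀ i, kp lm.1 i + kp lm.2 i = kp k i := by
              intro i
              have h1 := hc1 i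
              have h2 := hc2 i
              simp only [kp]
              rcases eq_or_ne i j with h | h <;> simp [h] at h1 h2 ⊢ <;> omega
            have hinsum : inn ω (kp lm.1) + inn ω (kp lm.2) = inn ω (kp k) := by
              unfold inn
              rw [← Finset.sum_add_distrib]
              apply Finset.sum_congr rfl
              intro i _
              rw [← mul_add, ← hkpeq i]
              push_cast
              ring
            have hds1 : (∑ i, lm.1.1 i) + ∑ i, lm.2.1 i = (∑ i, k.1 i) + 1 := by
              rw [← Finset.sum_add_distrib]
              rw [Finset.sum_congr rfl (fun i _ => hc1 i), Finset.sum_add_distrib]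
              simp
            have hds2 : (∑ i, lm.1.2 i) + ∑ i, lm.2.2 i = (∑ i, k.2 i) + 1 := by
              rw [← Finset.sum_add_distrib]
              rw [Finset.sum_congr rfl (fun i _ => hc2 i), Finset.sum_add_distrib]
              simp
            have hdsum : deg lm.1 + deg lm.2 = deg k + 2 := by
              unfold deg
              omega
            rcases hk with hk1 | hk2
            · -- `inn ω (kp k) < M₁`: then `lm.1` is outside the strip.
              have hout : inn ω (kp lm.1) < M₁ := by linarith
              have hdl' : deg lm.1 < d := by omega
              rw [IH lm.1 hdl' (Or.inl hout) t ht]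
              ring
            · -- `M₂ < inn ω (kp k)`: then `lm.2` is outside the strip.
              have hout : M₂ < inn ω (kp lm.2) := by linarith
              have hdm' : deg lm.2 < d := by omega
              rw [IH lm.2 hdm' (Or.inr hout) t ht]
              ring
          · rfl
        rw [tsum_congr this, tsum_zero]
      rw [hv1, hv2, add_zero]
    -- The function `t ↦ H t k` is constant on `[0, δ]`.
    have hconst := constant_of_has_deriv_right_zero (f := fun t => H t k) (a := 0) (b := δ)
      (fun x hx => ((hsol k h3 x hx.1).continuousWithinAt).mono
        (Set.Icc_subset_Ici_self))
      (fun x hx => by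
        have hder := (hsol k h3 x hx.1).mono (Set.Ici_subset_Ici.mpr hx.1)
        rwa [hzero x hx.1] at hder)
    have := hconst δ ⟨hδ, le_refl δ⟩
    simpa [hini k hk] using this

end
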